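/- arXiv:1401.6036 — 2 statements merged into one kernel-verified Lean document; each statement's English description precedes it below -/
import Mathlib

section
/- Let n be a positive integer, C ≤ F₂^{2n} a self-dual binary code, and σ = (1,2)(3,4)⋯(2n−1,2n) the coordinate permutation swapping 2i−1 and 2i for each i, with σ(C) = C. Define π(C(σ)) = {(c₁,…,c_n) ∈ F₂ⁿ : (c₁,c₁,c₂,c₂,…,c_n,c_n) ∈ C} and π({c + σ(c) : c ∈ C}) = {(d₂, d₄, …, d_{2n}) : d = c + σ(c) for some c ∈ C}. Then π({c + σ(c) : c ∈ C}) = π(C(σ))⊥; in particular π({c + σ(c) : c ∈ C}) ⊆ π(C(σ)). -/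
/-!
Write `p c = (d₂, d₄, …, d_{2n})` for `d = c + σ(c)` and `δ b = (b₁, b₁, …, b_n, b_n)`, so that
the two codes in question are `p(C)` and `δ⁻¹(C) = π(C(σ))`. Since `p c ⬝ b = c ⬝ δ b`, the dual
of `p(C)` is `δ⁻¹(C⊥) = δ⁻¹(C)`, and dualizing once more gives the equality. The inclusion holds
because `δ (p c) = c + σ(c)`, which lies in `C` when `σ(C) = C`.
-/

/-- The fixed point free involution `(1,2)(3,4)⋯(2n-1,2n)` of the `2n`
coordinates (0-indexed: it swaps `2k` and `2k+1`). -/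
def pairSwap (n : ℕ) : Equiv.Perm (Fin (2 * n)) where
  toFun i := ⟨2 * (i.val / 2) + (1 - i.val % 2), by have := i.isLt; omega⟩
  invFun i := ⟨2 * (i.val / 2) + (1 - i.val % 2), by have := i.isLt; omega⟩
  left_inv i := by
    apply Fin.ext
    simp only []
    omega
  right_inv i := by
    apply Fin.ext
    simp only []
    omega

/-- The linear map sending `(c₁, …, c_n)` to `(c₁, c₁, c₂, c₂, …, c_n, c_n)`. -/
def doubleMap (n : ℕ) : (Fin n → ZMod 2) →ₗ[ZMod 2] (Fin (2 * n) → ZMod 2) where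
  toFun c := fun i => c ⟨i.val / 2, by have := i.isLt; omega⟩
  map_add' := fun _ _ => rfl
  map_smul' := fun _ _ => rfl

/-- The dual code of a binary linear code. -/
def dualCode {n : ℕ} (D : Submodule (ZMod 2) (Fin n → ZMod 2)) :
    Submodule (ZMod 2) (Fin n → ZMod 2) where
  carrier := {v | ∀ c ∈ D, ∑ i, v i * c i = 0}
  zero_mem' := by intro c hc; simp
  add_mem' := by
    intro a b ha hb c hc
    simp [add_mul, Finset.sum_add_distrib, ha c hc, hb c hc]
  smul_mem' := by
    intro r a ha c hc
    simp [mul_assoc, ← Finset.mul_sum, ha c hc]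

/-- The linear map sending `c` to the vector of even-indexed (1-indexed)
coordinates `(d₂, d₄, …, d_{2n})` of `d = c + σ(c)`, where
`σ = (1,2)(3,4)⋯(2n-1,2n)`; here `σ(c) = c ∘ σ⁻¹`. -/
def projSumMap (n : ℕ) : (Fin (2 * n) → ZMod 2) →ₗ[ZMod 2] (Fin n → ZMod 2) where
  toFun c := fun j =>
    c ⟨2 * j.val + 1, by have := j.isLt; omega⟩ +
      c ((pairSwap n)⁻¹ ⟨2 * j.val + 1, by have := j.isLt; omega⟩)
  map_add' := by
    intro a b
    funext j
    simp only [Pi.add_apply]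
    ring
  map_smul' := by
    intro r a
    funext j
    simp only [Pi.smul_apply, RingHom.id_apply, smul_eq_mul]
    ring

open Matrix

lemma mem_dualCode_iff {m : ℕ} {D : Submodule (ZMod 2) (Fin m → ZMod 2)} {v : Fin m → ZMod 2} :
    v ∈ dualCode D ↔ ∀ c ∈ D, v ⬝ᵥ c = 0 := Iff.rfl

lemma dualCode_eq_orthogonal {m : ℕ} (D : Submodule (ZMod 2) (Fin m → ZMod 2)) :
    dualCode D = (toBilin' 1).orthogonal D := by
  ext v
  simp only [mem_dualCode_iff, LinearMap.BilinForm.mem_orthogonal_iff,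
    toBilin'_apply', one_mulVec, dotProduct_comm v]

theorem dualCode_dualCode {m : ℕ} (D : Submodule (ZMod 2) (Fin m → ZMod 2)) :
    dualCode (dualCode D) = D := by
  have hsymm : (toBilin' (1 : Matrix (Fin m) (Fin m) (ZMod 2))).IsSymm :=
    isSymm_toBilin'_iff_isSymm.mpr isSymm_one
  simp only [dualCode_eq_orthogonal]
  exact LinearMap.BilinForm.orthogonal_orthogonal
    (nondegenerate_of_det_ne_zero (by simp)).toBilin' hsymm.isRefl D

theorem dualCode_map_eq_comap_dualCode {m k : ℕ}
    {f : (Fin m → ZMod 2) →ₗ[ZMod 2] (Fin k → ZMod 2)}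
    {g : (Fin k → ZMod 2) →ₗ[ZMod 2] (Fin m → ZMod 2)}
    (hfg : ∀ c b, f c ⬝ᵥ b = c ⬝ᵥ g b) (C : Submodule (ZMod 2) (Fin m → ZMod 2)) :
    dualCode (C.map f) = (dualCode C).comap g := by
  ext b
  simp only [Submodule.mem_comap, mem_dualCode_iff, Submodule.mem_map, forall_exists_index, and_imp,
    forall_apply_eq_imp_iff₂, dotProduct_comm b, hfg, dotProduct_comm (g b)]

section Pairs

variable {n : ℕ}

lemma pairSwap_symm_val (i : Fin (2 * n)) :
    ((pairSwap n).symm i : ℕ) = 2 * (i / 2) + (1 - i % 2) := rfl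

lemma doubleMap_apply (b : Fin n → ZMod 2) (i : Fin (2 * n)) :
    doubleMap n b i = b ⟨i / 2, by omega⟩ := rfl

lemma projSumMap_apply (c : Fin (2 * n) → ZMod 2) (j : Fin n) :
    projSumMap n c j = c ⟨2 * j + 1, by omega⟩ + c ⟨2 * j, by omega⟩ := by
  simp only [projSumMap, LinearMap.coe_mk, AddHom.coe_mk, Equiv.Perm.inv_def]
  congr 2
  ext
  simp only [pairSwap_symm_val]
  omega

lemma sum_fin_two_mul {M : Type*} [AddCommMonoid M] (f : Fin (2 * n) → M) :
    ∑ i, f i = ∑ j : Fin n, (f ⟨2 * j, by omega⟩ + f ⟨2 * j + 1, by omega⟩) := by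
  rw [← (finProdFinEquiv.trans (finCongr (mul_comm n 2))).sum_comp, Fintype.sum_prod_type]
  refine Finset.sum_congr rfl fun j _ => ?_
  rw [Fin.sum_univ_two]
  congr 2 <;> ext <;> simp [finProdFinEquiv]; ring

lemma projSumMap_dotProduct (c : Fin (2 * n) → ZMod 2) (b : Fin n → ZMod 2) :
    projSumMap n c ⬝ᵥ b = c ⬝ᵥ doubleMap n b := by
  rw [dotProduct, dotProduct, sum_fin_two_mul]
  simp only [projSumMap_apply, doubleMap_apply]
  refine Finset.sum_congr rfl fun j _ => ?_
  have h₀ : (⟨2 * j / 2, by omega⟩ : Fin n) = j := Fin.ext (by simp)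
  have h₁ : (⟨(2 * j + 1) / 2, by omega⟩ : Fin n) = j := Fin.ext (by simp; omega)
  rw [h₀, h₁]
  ring

lemma doubleMap_projSumMap (c : Fin (2 * n) → ZMod 2) :
    doubleMap n (projSumMap n c) = c + fun i => c ((pairSwap n)⁻¹ i) := by
  funext ⟨i, hi⟩
  simp only [doubleMap_apply, projSumMap_apply, Pi.add_apply]
  rcases Nat.even_or_odd' i with ⟨k, rfl | rfl⟩
  · rw [add_comm]
    congr 2 <;> ext <;> simp [pairSwap_symm_val]
  · congr 2 <;> ext <;> simp [pairSwap_symm_val]; omega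

end Pairs

theorem proj_image_eq_dual_of_proj_fixed_code_general
    {n : ℕ} (C : Submodule (ZMod 2) (Fin (2 * n) → ZMod 2))
    (hC : C = dualCode C)
    (hσC : ∀ c : Fin (2 * n) → ZMod 2,
      c ∈ C ↔ (fun i => c ((pairSwap n)⁻¹ i)) ∈ C) :
    Submodule.map (projSumMap n) C = dualCode (Submodule.comap (doubleMap n) C) ∧
    Submodule.map (projSumMap n) C ≤ Submodule.comap (doubleMap n) C := by
  have hdual : dualCode (C.map (projSumMap n)) = C.comap (doubleMap n) := by
    rw [dualCode_map_eq_comap_dualCode projSumMap_dotProduct, ← hC]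
  refine ⟨by rw [← hdual, dualCode_dualCode], ?_⟩
  rintro _ ⟨c, hc, rfl⟩
  rw [Submodule.mem_comap, doubleMap_projSumMap]
  exact add_mem hc ((hσC c).mp hc)

/-- For a self-dual code `C` of length `2n` invariant under the involution
`σ = (1,2)(3,4)⋯(2n-1,2n)`, the projection of `{c + σ(c) : c ∈ C}` is the dual
of the projection `π(C(σ))` of the fixed code; in particular it is contained
in `π(C(σ))`. -/
theorem proj_image_eq_dual_of_proj_fixed_code
    {n : ℕ} (hn : 0 < n) (C : Submodule (ZMod 2) (Fin (2 * n) → ZMod 2))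
    (hC : C = dualCode C)
    (hσC : ∀ c : Fin (2 * n) → ZMod 2,
      c ∈ C ↔ (fun i => c ((pairSwap n)⁻¹ i)) ∈ C) :
    Submodule.map (projSumMap n) C = dualCode (Submodule.comap (doubleMap n) C) ∧
    Submodule.map (projSumMap n) C ≤ Submodule.comap (doubleMap n) C :=
  proj_image_eq_dual_of_proj_fixed_code_general C hC hσC
end

section
/- There exists a doubly-even semi self-dual binary code D of length 24 whose dual code D⊥ has dimension 13 and minimum distance exactly 4 (so the bound d(D⊥) ≤ 4μ for doubly-even semi self-dual codes of length 24μ is sharp for μ = 1). -/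
/-- The Hamming weight of a word in `(ZMod 2)^n`. -/
def wt {n : ℕ} (c : Fin n → ZMod 2) : ℕ :=
  (Finset.univ.filter fun i => c i ≠ 0).card

/-- A semi self-dual code: self-orthogonal, contains the all-ones vector,
and has codimension 2 in its dual. -/
def IsSemiSelfDual {n : ℕ} (D : Submodule (ZMod 2) (Fin n → ZMod 2)) : Prop :=
  D ≤ dualCode D ∧ (fun _ => 1 : Fin n → ZMod 2) ∈ D ∧
    Module.finrank (ZMod 2) (dualCode D) = Module.finrank (ZMod 2) D + 2

/-- The minimum distance: minimum weight of a nonzero codeword. -/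
noncomputable def minDist {n : ℕ} (C : Submodule (ZMod 2) (Fin n → ZMod 2)) : ℕ :=
  sInf {k | ∃ c ∈ C, c ≠ 0 ∧ wt c = k}

/-- Doubly-even codes. -/
def IsDoublyEven {n : ℕ} (D : Submodule (ZMod 2) (Fin n → ZMod 2)) : Prop :=
  ∀ c ∈ D, wt c % 4 = 0

/-!
Take for `D` the span of eleven pairwise orthogonal words of weight divisible by 4. Since
`wt (a + b) + 2 wt (a * b) = wt a + wt b` and `a ⬝ᵥ b ≡ wt (a * b) (mod 2)`, such a span is
self-orthogonal and doubly even. A right inverse of the generator matrix shows that `D` has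
dimension 11, so `D⊥` has dimension 13. Every word of `D⊥` has even weight because `𝟏 ∈ D`, none has
weight 2 because the generators separate the coordinates, and an explicit word of weight 4 lies
in `D⊥`.
-/

open Matrix Module Submodule

theorem ZMod.eq_zero_or_eq_one (x : ZMod 2) : x = 0 ∨ x = 1 := by
  revert x; decide

section BinaryCode

variable {n : ℕ}

theorem wt_eq_sum_val (c : Fin n → ZMod 2) : wt c = ∑ i, (c i).val := by
  rw [wt, Finset.card_filter]
  refine Finset.sum_congr rfl fun i _ => ?_
  generalize c i = x
  fin_cases x <;> rfl

theorem natCast_wt (c : Fin n → ZMod 2) : (wt c : ZMod 2) = ∑ i, c i := by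
  simp [wt_eq_sum_val]

theorem dotProduct_eq_natCast_wt_mul (a b : Fin n → ZMod 2) : a ⬝ᵥ b = (wt (a * b) : ZMod 2) := by
  rw [natCast_wt]
  rfl

theorem wt_add_add_two_mul_wt_mul (a b : Fin n → ZMod 2) :
    wt (a + b) + 2 * wt (a * b) = wt a + wt b := by
  simp only [wt_eq_sum_val, Finset.mul_sum, ← Finset.sum_add_distrib]
  refine Finset.sum_congr rfl fun i _ => ?_
  simp only [Pi.add_apply, Pi.mul_apply]
  generalize a i = x
  generalize b i = y
  revert x y
  decide

theorem wt_add_mod_four {a b : Fin n → ZMod 2} (hab : a ⬝ᵥ b = 0) :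
    wt (a + b) % 4 = (wt a + wt b) % 4 := by
  rw [dotProduct_eq_natCast_wt_mul, ZMod.natCast_eq_zero_iff] at hab
  obtain ⟨k, hk⟩ := hab
  have := wt_add_add_two_mul_wt_mul a b
  omega

theorem dotProduct_eq_sum_support (v c : Fin n → ZMod 2) :
    v ⬝ᵥ c = ∑ i ∈ Finset.univ.filter (fun i => v i ≠ 0), c i := by
  rw [Finset.sum_filter]
  refine Finset.sum_congr rfl fun i _ => ?_
  rcases ZMod.eq_zero_or_eq_one (v i) with h | h <;> simp [h]

theorem mem_dualCode_span_iff {S : Set (Fin n → ZMod 2)} {v : Fin n → ZMod 2} :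
    v ∈ dualCode (span (ZMod 2) S) ↔ ∀ c ∈ S, v ⬝ᵥ c = 0 :=
  ⟨fun h c hc => h c (subset_span hc),
    fun h _ hc => (span_le (p := LinearMap.ker (dotProductBilin (ZMod 2) (ZMod 2) v))).2 h hc⟩

theorem span_le_dualCode_span {S : Set (Fin n → ZMod 2)}
    (hS : ∀ a ∈ S, ∀ b ∈ S, a ⬝ᵥ b = 0) : span (ZMod 2) S ≤ dualCode (span (ZMod 2) S) :=
  fun a ha => mem_dualCode_span_iff.2 fun b hb => by
    rw [dotProduct_comm]
    exact mem_dualCode_span_iff.2 (hS b hb) a ha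

theorem isDoublyEven_span {S : Set (Fin n → ZMod 2)} (hS : ∀ a ∈ S, ∀ b ∈ S, a ⬝ᵥ b = 0)
    (hwt : ∀ a ∈ S, wt a % 4 = 0) : IsDoublyEven (span (ZMod 2) S) := by
  intro c hc
  induction hc using span_induction with
  | mem a ha => exact hwt a ha
  | zero => simp [wt_eq_sum_val]
  | add a b ha hb iha ihb =>
    rw [wt_add_mod_four (span_le_dualCode_span hS ha b hb)]
    omega
  | smul r a _ iha =>
    rcases ZMod.eq_zero_or_eq_one r with rfl | rfl
    · simp [wt_eq_sum_val]
    · simpa using iha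

theorem four_le_wt_of_mem_dualCode {D : Submodule (ZMod 2) (Fin n → ZMod 2)} (hone : 1 ∈ D)
    (hsep : ∀ i j, i ≠ j → ∃ c ∈ D, c i ≠ c j) {v : Fin n → ZMod 2} (hv : v ∈ dualCode D)
    (hv0 : v ≠ 0) : 4 ≤ wt v := by
  have heven : 2 ∣ wt v := by
    rw [← ZMod.natCast_eq_zero_iff, natCast_wt, ← dotProduct_one]
    exact hv 1 hone
  have hpos : wt v ≠ 0 := fun h => hv0 (hammingNorm_eq_zero.1 h)
  have hne2 : wt v ≠ 2 := by
    intro h2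
    obtain ⟨i, j, hij, hsupp⟩ := Finset.card_eq_two.1 h2
    obtain ⟨c, hc, hcij⟩ := hsep i j hij
    have : v ⬝ᵥ c = 0 := hv c hc
    rw [dotProduct_eq_sum_support, hsupp, Finset.sum_pair hij] at this
    exact hcij (CharTwo.add_eq_zero.1 this)
  omega

theorem minDist_eq_of_forall_le {C : Submodule (ZMod 2) (Fin n → ZMod 2)} {d : ℕ}
    (hd : ∃ c ∈ C, c ≠ 0 ∧ wt c = d) (hle : ∀ c ∈ C, c ≠ 0 → d ≤ wt c) : minDist C = d :=
  le_antisymm (Nat.sInf_le hd) (le_csInf ⟨d, hd⟩ fun _ ⟨c, hc, hc0, hwt⟩ => hwt ▸ hle c hc hc0)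

variable {m : ℕ}

theorem dualCode_span_row (G : Matrix (Fin m) (Fin n) (ZMod 2)) :
    dualCode (span (ZMod 2) (Set.range G.row)) = LinearMap.ker G.mulVecLin := by
  ext v
  simp only [mem_dualCode_span_iff, Set.forall_mem_range, LinearMap.mem_ker, mulVecLin_apply,
    funext_iff, Pi.zero_apply, dotProduct_comm v]
  rfl

theorem rank_add_finrank_dualCode_span_row (G : Matrix (Fin m) (Fin n) (ZMod 2)) :
    G.rank + finrank (ZMod 2) (dualCode (span (ZMod 2) (Set.range G.row))) = n := by
  rw [dualCode_span_row, rank, LinearMap.finrank_range_add_finrank_ker, finrank_fin_fun]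

end BinaryCode

theorem Matrix.rank_eq_of_mul_eq_one {R : Type*} [CommSemiring R] [StrongRankCondition R] {m n : ℕ}
    {G : Matrix (Fin m) (Fin n) R} {W : Matrix (Fin n) (Fin m) R} (h : G * W = 1) :
    G.rank = m :=
  le_antisymm (rank_le_height G) (by simpa [h] using rank_mul_le_left G W)

/- Three blocks of 8 coordinates: the first two carry the `[8,3,4]` code spanned by the first three
rows of the extended Hamming code `e₈`, the third carries all of `e₈`, and the last row glues the
first two blocks along the fourth row of `e₈`. The glue separates the coordinate pairs that the
`[8,3,4]` blocks do not, killing the weight-2 words of the dual, while `11110000|0⋯0|0⋯0` stays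
in the dual. -/
def G24 : Matrix (Fin 11) (Fin 24) (ZMod 2) :=
  !![1,1,1,1,1,1,1,1, 0,0,0,0,0,0,0,0, 0,0,0,0,0,0,0,0;
     1,1,1,1,0,0,0,0, 0,0,0,0,0,0,0,0, 0,0,0,0,0,0,0,0;
     1,1,0,0,1,1,0,0, 0,0,0,0,0,0,0,0, 0,0,0,0,0,0,0,0;
     0,0,0,0,0,0,0,0, 1,1,1,1,1,1,1,1, 0,0,0,0,0,0,0,0;
     0,0,0,0,0,0,0,0, 1,1,1,1,0,0,0,0, 0,0,0,0,0,0,0,0;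
     0,0,0,0,0,0,0,0, 1,1,0,0,1,1,0,0, 0,0,0,0,0,0,0,0;
     0,0,0,0,0,0,0,0, 0,0,0,0,0,0,0,0, 1,1,1,1,1,1,1,1;
     0,0,0,0,0,0,0,0, 0,0,0,0,0,0,0,0, 1,1,1,1,0,0,0,0;
     0,0,0,0,0,0,0,0, 0,0,0,0,0,0,0,0, 1,1,0,0,1,1,0,0;
     0,0,0,0,0,0,0,0, 0,0,0,0,0,0,0,0, 1,0,1,0,1,0,1,0;
     1,0,1,0,1,0,1,0, 1,0,1,0,1,0,1,0, 0,0,0,0,0,0,0,0]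

def G24RightInv : Matrix (Fin 24) (Fin 11) (ZMod 2) :=
  (!![0,1,1,0,1,0,0,0, 0,0,0,0,0,0,0,0, 0,0,0,0,0,0,0,0;
      1,0,0,0,1,0,0,0, 0,0,0,0,0,0,0,0, 0,0,0,0,0,0,0,0;
      1,0,1,0,0,0,0,0, 0,0,0,0,0,0,0,0, 0,0,0,0,0,0,0,0;
      1,1,0,0,0,0,0,0, 1,0,1,0,1,0,0,0, 0,0,0,0,0,0,0,0;
      0,0,0,0,0,0,0,0, 1,0,0,0,1,0,0,0, 0,0,0,0,0,0,0,0;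
      0,0,0,0,0,0,0,0, 1,0,1,0,0,0,0,0, 0,0,0,0,0,0,0,0;
      0,0,0,0,0,0,0,0, 0,0,0,0,0,0,0,0, 0,1,1,0,1,0,0,0;
      0,0,0,0,0,0,0,0, 0,0,0,0,0,0,0,0, 1,0,0,0,1,0,0,0;
      0,0,0,0,0,0,0,0, 0,0,0,0,0,0,0,0, 1,0,1,0,0,0,0,0;
      0,0,0,0,0,0,0,0, 0,0,0,0,0,0,0,0, 1,1,0,0,0,0,0,0;
      1,1,0,0,0,0,0,0, 0,0,0,0,0,0,0,0, 0,0,0,0,0,0,0,0] :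
    Matrix (Fin 11) (Fin 24) (ZMod 2))ᵀ

def D24 : Submodule (ZMod 2) (Fin 24 → ZMod 2) := span (ZMod 2) (Set.range G24.row)

theorem G24_rows_orthogonal :
    ∀ a ∈ Set.range G24.row, ∀ b ∈ Set.range G24.row, a ⬝ᵥ b = 0 := by
  simp only [Set.forall_mem_range]
  decide

theorem G24_rows_wt_mod_four : ∀ a ∈ Set.range G24.row, wt a % 4 = 0 := by
  simp only [Set.forall_mem_range]
  decide

theorem G24_mul_G24RightInv : G24 * G24RightInv = 1 := by decide

theorem G24_rows_separate (i j : Fin 24) (hij : i ≠ j) : ∃ k, G24 k i ≠ G24 k j := by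
  revert i j; decide

theorem one_mem_D24 : 1 ∈ D24 := by
  have : (1 : Fin 24 → ZMod 2) = G24 0 + G24 3 + G24 6 := by decide
  rw [this]
  exact add_mem (add_mem (subset_span ⟨0, rfl⟩) (subset_span ⟨3, rfl⟩)) (subset_span ⟨6, rfl⟩)

theorem finrank_D24 : finrank (ZMod 2) D24 = 11 := by
  rw [D24, ← rank_eq_finrank_span_row, rank_eq_of_mul_eq_one G24_mul_G24RightInv]

theorem finrank_dualCode_D24 : finrank (ZMod 2) (dualCode D24) = 13 := by
  have := rank_add_finrank_dualCode_span_row G24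
  rw [rank_eq_of_mul_eq_one G24_mul_G24RightInv] at this
  rw [D24]
  omega

theorem isSemiSelfDual_D24 : IsSemiSelfDual D24 :=
  ⟨span_le_dualCode_span G24_rows_orthogonal, one_mem_D24,
    by rw [finrank_dualCode_D24, finrank_D24]⟩

theorem isDoublyEven_D24 : IsDoublyEven D24 :=
  isDoublyEven_span G24_rows_orthogonal G24_rows_wt_mod_four

theorem minDist_dualCode_D24 : minDist (dualCode D24) = 4 := by
  have hsep (i j : Fin 24) (hij : i ≠ j) : ∃ c ∈ D24, c i ≠ c j := by
    obtain ⟨k, hk⟩ := G24_rows_separate i j hij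
    exact ⟨G24 k, subset_span ⟨k, rfl⟩, hk⟩
  let w : Fin 24 → ZMod 2 := fun i => if (i : ℕ) < 4 then 1 else 0
  have hw : w ∈ dualCode D24 := by
    rw [D24, dualCode_span_row, LinearMap.mem_ker]
    decide
  exact minDist_eq_of_forall_le ⟨w, hw, by decide, by decide⟩
    fun v hv hv0 => four_le_wt_of_mem_dualCode one_mem_D24 hsep hv hv0

/-- There is a doubly-even semi self-dual code of length 24 whose dual code has
dimension 13 and minimum distance exactly 4. -/
theorem exists_doubly_even_semi_self_dual_length_24_dual_distance_4 :
    ∃ D : Submodule (ZMod 2) (Fin 24 → ZMod 2), IsSemiSelfDual D ∧ IsDoublyEven D ∧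
      Module.finrank (ZMod 2) (dualCode D) = 13 ∧ minDist (dualCode D) = 4 :=
  ⟨D24, isSemiSelfDual_D24, isDoublyEven_D24, finrank_dualCode_D24, minDist_dualCode_D24⟩
end
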